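/- arXiv:1601.04313 — 2 statements merged into one kernel-verified Lean document; each statement's English description precedes it below -/
import Mathlib

section
/- Let L be an abelian Lie subalgebra of W(A) of finite rank over R and F = R^L its field of constants. Then FL is an abelian Lie subalgebra of W(A) and rk_R(L) = dim_F(FL). -/
/-!
An element of `L` kills every constant and commutes with `L`, so by the Leibniz rule
`⁅D, r • E⁆ = r • ⁅D, E⁆ + D r • E` it commutes with `F`-combinations of `L`; hence `FL` is
abelian. For the rank, choose an `R`-basis `t ⊆ L` of `RL`. If `E = ∑ cₘ m ∈ L` with `m ∈ t`,
then for every `D ∈ L` we get `0 = ⁅D, E⁆ = ∑ D(cₘ) m`, so all `cₘ` are constants. Thus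
`FL = F t`, and `t`, being `R`-independent, is an `F`-basis of `FL`.
-/

noncomputable section

/-- The field of constants of a set of `K`-derivations of a field `R`:
`{r ∈ R | D r = 0 for all D ∈ S}`. -/
def derivConstants (K R : Type*) [CommRing K] [Field R] [Algebra K R]
    (S : Set (Derivation K R R)) : Subfield R where
  carrier := {r : R | ∀ D ∈ S, D r = 0}
  mul_mem' := by
    intro a b ha hb D hD
    rw [Derivation.leibniz]
    simp [ha D hD, hb D hD]
  one_mem' := by intro D _; simp
  add_mem' := by intro a b ha hb D hD; simp [ha D hD, hb D hD]
  zero_mem' := by intro D _; simp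
  neg_mem' := by intro a ha D hD; simp [ha D hD]
  inv_mem' := by
    intro a ha D hD
    rcases eq_or_ne a 0 with h | h
    · simp [h]
    · have h1 : D (a * a⁻¹) = 0 := by rw [mul_inv_cancel₀ h]; simp
      rw [Derivation.leibniz, ha D hD] at h1
      simpa [h] using h1

/-- `W(A) = R · Der_K(A)` : the `R`-span, inside `Der_K(R)`, of the set of `K`-derivations
of `R` that map the image of `A` into itself.  Here `R` is the fraction field of the
integral domain `A`. -/
def wAlg (K A R : Type*) [Field K] [CommRing A] [IsDomain A] [Algebra K A]
    [Field R] [Algebra A R] [IsFractionRing A R] [Algebra K R] [IsScalarTower K A R] :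
    Submodule R (Derivation K R R) :=
  Submodule.span R
    {D : Derivation K R R | ∀ a : A, ∃ b : A, D (algebraMap A R a) = algebraMap A R b}

theorem Derivation.lie_linearCombination {K R ι : Type*} [CommRing K] [CommRing R] [Algebra K R]
    (D : Derivation K R R) {v : ι → Derivation K R R} (hv : ∀ i, ⁅D, v i⁆ = 0) (c : ι →₀ R) :
    ⁅D, Finsupp.linearCombination R v c⁆ =
      Finsupp.linearCombination R v (c.mapRange D (map_zero D)) := by
  induction c using Finsupp.induction_linear with
  | zero => simp
  | add c d hc hd => simp only [map_add, lie_add, hc, hd, Finsupp.mapRange_add (map_add D)]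
  | single i r => simp [hv]

section derivConstants

variable {K R : Type*} [CommRing K] [Field R] [Algebra K R] {S : Set (Derivation K R R)}

theorem apply_eq_zero_of_mem_span_derivConstants {x : Derivation K R R}
    (hx : x ∈ Submodule.span (derivConstants K R S) S) {r : R} (hr : r ∈ derivConstants K R S) :
    x r = 0 := by
  induction hx using Submodule.span_induction with
  | mem D hD => exact hr D hD
  | zero => rfl
  | add u v _ _ hu hv => simp [hu, hv]
  | smul s u _ hu => simp [Subfield.smul_def, hu]

theorem lie_eq_zero_of_mem_span_derivConstants {D x : Derivation K R R}
    (hD : ∀ r ∈ derivConstants K R S, D r = 0) (hDS : ∀ E ∈ S, ⁅D, E⁆ = 0)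
    (hx : x ∈ Submodule.span (derivConstants K R S) S) : ⁅D, x⁆ = 0 := by
  induction hx using Submodule.span_induction with
  | mem E hE => exact hDS E hE
  | zero => exact lie_zero D
  | add u v _ _ hu hv => rw [lie_add, hu, hv, add_zero]
  | smul s u _ hu => simp [Subfield.smul_def, hu, hD s s.2]

theorem lie_eq_zero_of_mem_span_derivConstants_of_commute {x y : Derivation K R R}
    (hS : ∀ x ∈ S, ∀ y ∈ S, ⁅x, y⁆ = 0)
    (hx : x ∈ Submodule.span (derivConstants K R S) S)
    (hy : y ∈ Submodule.span (derivConstants K R S) S) : ⁅x, y⁆ = 0 := by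
  refine lie_eq_zero_of_mem_span_derivConstants
    (fun r hr => apply_eq_zero_of_mem_span_derivConstants hx hr) (fun E hE => ?_) hy
  rw [← lie_skew, neg_eq_zero]
  exact lie_eq_zero_of_mem_span_derivConstants (fun r hr => hr E hE) (hS E hE) hx

theorem coeff_mem_derivConstants {ι : Type*} {v : ι → Derivation K R R}
    (hS : ∀ x ∈ S, ∀ y ∈ S, ⁅x, y⁆ = 0) (hvS : ∀ i, v i ∈ S)
    (hv : LinearIndependent R v) {c : ι →₀ R} (hc : Finsupp.linearCombination R v c ∈ S)
    (i : ι) : c i ∈ derivConstants K R S := by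
  intro D hD
  have hDc : Finsupp.linearCombination R v (c.mapRange D (map_zero D)) = 0 := by
    rw [← D.lie_linearCombination (fun j => hS D hD _ (hvS j))]
    exact hS D hD _ hc
  simpa using DFunLike.congr_fun (linearIndependent_iff.mp hv _ hDc) i

theorem subset_span_derivConstants_of_linearIndependent {t : Set (Derivation K R R)}
    (hS : ∀ x ∈ S, ∀ y ∈ S, ⁅x, y⁆ = 0)
    (htS : t ⊆ S) (hspan : Submodule.span R t = Submodule.span R S)
    (ht : LinearIndependent R (Subtype.val : t → Derivation K R R)) :
    S ⊆ Submodule.span (derivConstants K R S) t := by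
  intro E hE
  obtain ⟨c, rfl⟩ := (Finsupp.mem_span_iff_linearCombination R t E).mp
    (hspan ▸ Submodule.subset_span hE)
  rw [Finsupp.linearCombination_apply]
  refine Submodule.sum_mem _ fun m _ => ?_
  have hcm : c m ∈ derivConstants K R S := coeff_mem_derivConstants hS (fun j => htS j.2) ht hE m
  exact Submodule.smul_mem _ (⟨c m, hcm⟩ : derivConstants K R S) (Submodule.subset_span m.2)

theorem rank_span_eq_rank_span_derivConstants (hS : ∀ x ∈ S, ∀ y ∈ S, ⁅x, y⁆ = 0) :
    Module.rank R (Submodule.span R S) =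
      Module.rank (derivConstants K R S) (Submodule.span (derivConstants K R S) S) := by
  obtain ⟨t, htS, hspan, ht⟩ := exists_linearIndependent R S
  have hspanF : Submodule.span (derivConstants K R S) S = Submodule.span _ t :=
    le_antisymm
      (Submodule.span_le.mpr (subset_span_derivConstants_of_linearIndependent hS htS hspan ht))
      (Submodule.span_mono htS)
  rw [← hspan, hspanF, rank_span_set ht, rank_span_set (ht.restrict_scalars' _)]

end derivConstants

theorem statement3_general
    (K A R : Type*) [Field K] [CommRing A] [IsDomain A] [Algebra K A]
    [Field R] [Algebra A R] [IsFractionRing A R] [Algebra K R] [IsScalarTower K A R]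
    (L : LieSubalgebra K (Derivation K R R))
    (hLW : (L : Set (Derivation K R R)) ⊆ (wAlg K A R : Set (Derivation K R R)))
    (habelian : IsLieAbelian L)
    (F : Subfield R) (hF : F = derivConstants K R (L : Set (Derivation K R R))) :
    (∀ x ∈ Submodule.span F (L : Set (Derivation K R R)),
      ∀ y ∈ Submodule.span F (L : Set (Derivation K R R)), ⁅x, y⁆ = 0) ∧
    ((Submodule.span F (L : Set (Derivation K R R)) : Set (Derivation K R R)) ⊆
      (wAlg K A R : Set (Derivation K R R))) ∧
    Module.rank R (Submodule.span R (L : Set (Derivation K R R))) =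
      Module.rank F (Submodule.span F (L : Set (Derivation K R R))) := by
  subst hF
  have hL : ∀ x ∈ (L : Set (Derivation K R R)), ∀ y ∈ (L : Set (Derivation K R R)),
      ⁅x, y⁆ = 0 := fun x hx y hy => by
    simpa using congrArg Subtype.val (trivial_lie_zero L L ⟨x, hx⟩ ⟨y, hy⟩)
  have hLW' : Submodule.span (derivConstants K R (L : Set (Derivation K R R))) (L : Set _) ≤
      (wAlg K A R).restrictScalars _ :=
    Submodule.span_le.mpr hLW
  exact ⟨fun x hx y hy => lie_eq_zero_of_mem_span_derivConstants_of_commute hL hx hy,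
    fun x hx => hLW' hx, rank_span_eq_rank_span_derivConstants hL⟩

/-- Let `L` be an abelian Lie subalgebra of `W(A)` of finite rank over `R`
and `F = R^L` its field of constants.  Then `FL` is an abelian Lie subalgebra of `W(A)` and
`rk_R(L) = dim_F(FL)`. -/
theorem statement3
    (K A R : Type*) [Field K] [CharZero K] [CommRing A] [IsDomain A] [Algebra K A]
    [Field R] [Algebra A R] [IsFractionRing A R] [Algebra K R] [IsScalarTower K A R]
    (L : LieSubalgebra K (Derivation K R R))
    (hLW : (L : Set (Derivation K R R)) ⊆ (wAlg K A R : Set (Derivation K R R)))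
    (habelian : IsLieAbelian L)
    (hfin : Module.Finite R (Submodule.span R (L : Set (Derivation K R R))))
    (F : Subfield R) (hF : F = derivConstants K R (L : Set (Derivation K R R))) :
    (∀ x ∈ Submodule.span F (L : Set (Derivation K R R)),
      ∀ y ∈ Submodule.span F (L : Set (Derivation K R R)), ⁅x, y⁆ = 0) ∧
    ((Submodule.span F (L : Set (Derivation K R R)) : Set (Derivation K R R)) ⊆
      (wAlg K A R : Set (Derivation K R R))) ∧
    Module.rank R (Submodule.span R (L : Set (Derivation K R R))) =
      Module.rank F (Submodule.span F (L : Set (Derivation K R R))) :=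
  statement3_general K A R L hLW habelian F hF
end
end

section
/- Let D₁, D₂, D₃ ∈ W(A) and a ∈ R be such that D₁(a) = D₂(a) = 0 and D₃(a) = 1, and let F = R^{D₁} ∩ R^{D₂} ∩ R^{D₃} be the common field of constants. If b ∈ R satisfies D₁(b) = D₂(b) = 0 and D₃(b) lies in the F-span of {1, a, a²/2!, …, aˢ/s!} for some integer s ≥ 0, then b lies in the F-span of {1, a, a²/2!, …, a^{s+1}/(s+1)!}. -/
noncomputable section

/-! A derivation killing a subfield `F` is `F`-linear, and `D(a^{i+1}/(i+1)!) = D(a) · aⁱ/i!`.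
Hence the elements `a^{i+1}/(i+1)!`, `i ≤ s`, are killed by `D₁, D₂` and mapped by `D₃` onto
the `aⁱ/i!`, so `D₃ b` has an antiderivative `z` in their `F`-span which `D₁, D₂` also kill.
Then `b - z` is a common constant, i.e. lies in `F`. -/

@[simp]
theorem mem_derivConstants {K R : Type*} [CommRing K] [Field R] [Algebra K R]
    {S : Set (Derivation K R R)} {r : R} :
    r ∈ derivConstants K R S ↔ ∀ D ∈ S, D r = 0 :=
  Iff.rfl

namespace Derivation

variable {K R : Type*} [CommRing K] [Field R] [Algebra K R]

def toLinearMapOfConstants (D : Derivation K R R) (F : Subfield R) (hF : ∀ c ∈ F, D c = 0) :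
    R →ₗ[F] R where
  toFun := D
  map_add' := D.map_add
  map_smul' c x := by simp [Subfield.smul_def, D.leibniz, hF c c.2]

theorem map_eq_zero_of_mem_span (D : Derivation K R R) {F : Subfield R}
    (hF : ∀ c ∈ F, D c = 0) {T : Set R} (hT : ∀ t ∈ T, D t = 0) {x : R}
    (hx : x ∈ Submodule.span F T) : D x = 0 :=
  Submodule.span_le (p := LinearMap.ker (D.toLinearMapOfConstants F hF)) |>.mpr hT hx

theorem map_pow_succ_div_factorial [CharZero R] (D : Derivation K R R) (a : R) (n : ℕ) :
    D (a ^ (n + 1) / (n + 1).factorial) = D a * (a ^ n / n.factorial) := by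
  rw [leibniz_div_const _ _ _ (D.map_natCast _), leibniz_pow, Nat.factorial_succ]
  have : ((n : R) + 1) ≠ 0 := n.cast_add_one_ne_zero
  have : (n.factorial : R) ≠ 0 := Nat.cast_ne_zero.mpr n.factorial_ne_zero
  simp only [smul_eq_mul, nsmul_eq_mul, Nat.add_sub_cancel, Nat.cast_mul, Nat.cast_succ]
  field_simp

theorem exists_mem_span_pow_succ_div_factorial_map_eq [CharZero R] (D : Derivation K R R)
    {F : Subfield R} (hF : ∀ c ∈ F, D c = 0) {a : R} (ha : D a = 1) {s : ℕ} {y : R}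
    (hy : y ∈ Submodule.span F {x : R | ∃ i ≤ s, x = a ^ i / (i.factorial : R)}) :
    ∃ z ∈ Submodule.span F {x : R | ∃ i ≤ s, x = a ^ (i + 1) / ((i + 1).factorial : R)},
      D z = y := by
  have hspan : Submodule.span F {x : R | ∃ i ≤ s, x = a ^ i / (i.factorial : R)} ≤
      (Submodule.span F {x : R | ∃ i ≤ s, x = a ^ (i + 1) / ((i + 1).factorial : R)}).map
        (D.toLinearMapOfConstants F hF) := by
    rw [Submodule.map_span, Submodule.span_le]
    rintro _ ⟨i, hi, rfl⟩
    refine Submodule.subset_span ⟨_, ⟨i, hi, rfl⟩, ?_⟩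
    simp [toLinearMapOfConstants, map_pow_succ_div_factorial, ha]
  exact hspan hy

end Derivation

theorem statement8_general
    (K R : Type*) [Field K] [CharZero K] [Field R] [Algebra K R]
    (D₁ D₂ D₃ : Derivation K R R)
    (a : R) (ha₁ : D₁ a = 0) (ha₂ : D₂ a = 0) (ha₃ : D₃ a = 1)
    (F : Subfield R) (hF : F = derivConstants K R {D₁, D₂, D₃})
    (b : R) (s : ℕ) (hb₁ : D₁ b = 0) (hb₂ : D₂ b = 0)
    (hb₃ : D₃ b ∈ Submodule.span F {x : R | ∃ i ≤ s, x = a ^ i / (Nat.factorial i : R)}) :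
    b ∈ Submodule.span F {x : R | ∃ i ≤ s + 1, x = a ^ i / (Nat.factorial i : R)} := by
  have : CharZero R := charZero_of_injective_algebraMap (algebraMap K R).injective
  have hF₁ : ∀ c ∈ F, D₁ c = 0 := fun c hc => (hF ▸ hc) D₁ (by simp)
  have hF₂ : ∀ c ∈ F, D₂ c = 0 := fun c hc => (hF ▸ hc) D₂ (by simp)
  have hF₃ : ∀ c ∈ F, D₃ c = 0 := fun c hc => (hF ▸ hc) D₃ (by simp)
  obtain ⟨z, hz, hD₃z⟩ := D₃.exists_mem_span_pow_succ_div_factorial_map_eq hF₃ ha₃ hb₃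
  have hD₁z : D₁ z = 0 := D₁.map_eq_zero_of_mem_span hF₁ (by
    rintro _ ⟨i, -, rfl⟩; simp [Derivation.map_pow_succ_div_factorial, ha₁]) hz
  have hD₂z : D₂ z = 0 := D₂.map_eq_zero_of_mem_span hF₂ (by
    rintro _ ⟨i, -, rfl⟩; simp [Derivation.map_pow_succ_div_factorial, ha₂]) hz
  have hconst : b - z ∈ F := by
    rw [hF]
    simp [hb₁, hb₂, hD₁z, hD₂z, hD₃z]
  have hb : b = (⟨b - z, hconst⟩ : F) • (1 : R) + z := by simp [Subfield.smul_def]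
  rw [hb]
  refine add_mem
    (Submodule.smul_mem _ _ (Submodule.subset_span ⟨0, (s + 1).zero_le, by simp⟩))
    (Submodule.span_mono ?_ hz)
  rintro _ ⟨i, hi, rfl⟩
  exact ⟨i + 1, by omega, rfl⟩

/-- Let `D₁, D₂, D₃ ∈ W(A)` and `a ∈ R` with `D₁(a) = D₂(a) = 0`,
`D₃(a) = 1`, and let `F = R^{D₁} ∩ R^{D₂} ∩ R^{D₃}`.  If `b ∈ R` satisfies
`D₁(b) = D₂(b) = 0` and `D₃(b) ∈ F⟨1, a, …, aˢ/s!⟩` for some `s ≥ 0`, then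
`b ∈ F⟨1, a, …, a^{s+1}/(s+1)!⟩`. -/
theorem statement8
    (K A R : Type*) [Field K] [CharZero K] [CommRing A] [IsDomain A] [Algebra K A]
    [Field R] [Algebra A R] [IsFractionRing A R] [Algebra K R] [IsScalarTower K A R]
    (D₁ D₂ D₃ : Derivation K R R)
    (hD₁ : D₁ ∈ wAlg K A R) (hD₂ : D₂ ∈ wAlg K A R) (hD₃ : D₃ ∈ wAlg K A R)
    (a : R) (ha₁ : D₁ a = 0) (ha₂ : D₂ a = 0) (ha₃ : D₃ a = 1)
    (F : Subfield R) (hF : F = derivConstants K R {D₁, D₂, D₃})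
    (b : R) (s : ℕ) (hb₁ : D₁ b = 0) (hb₂ : D₂ b = 0)
    (hb₃ : D₃ b ∈ Submodule.span F {x : R | ∃ i ≤ s, x = a ^ i / (Nat.factorial i : R)}) :
    b ∈ Submodule.span F {x : R | ∃ i ≤ s + 1, x = a ^ i / (Nat.factorial i : R)} :=
  statement8_general K R D₁ D₂ D₃ a ha₁ ha₂ ha₃ F hF b s hb₁ hb₂ hb₃
end
end
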